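/- arXiv:1406.4398 — 2 statements merged into one kernel-verified Lean document; each statement's English description precedes it below -/
import Mathlib

section
/- Define α_{3n} = q^{(3n-2)n}(1-q^{6n+1})/(1-q), α_{3n+1} = 0, α_{3n+2} = -q^{(3n+2)n}(1-q^{6n+5})/(1-q), and β_n = q^{n(n-1)}/(q;q)_{2n}. Then for every n≥0, β_n = Σ_{r=0}^n α_r / ((q;q)_{n-r} (q^2;q)_{n+r}). -/
open scoped BigOperators

/-- Finite q-Pochhammer symbol `(x;q)_n = ∏_{k=0}^{n-1} (1 - x qᵏ)`. -/
noncomputable def poch (x q : ℂ) (n : ℕ) : ℂ := ∏ k ∈ Finset.range n, (1 - x * q ^ k)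

/-- Infinite q-Pochhammer symbol `(x;q)_∞ = ∏_{k≥0} (1 - x qᵏ)`. -/
noncomputable def pochInf (x q : ℂ) : ℂ := ∏' k : ℕ, (1 - x * q ^ k)

/-!
Multiplying by `(q;q)_{2n+1}` turns the claim into the finite identity
`∑_{j ∈ ℤ} (q^{3j²-2j} - q^{3j²+4j+1}) [2n+1, n-3j]_q = q^{n(n-1)} (1 - q^{2n+1})`:
`(1 - q) α_r` is this weight at `j = r/3` for `r ≡ 0` and at `j = -(r+1)/3` for
`r ≡ 2 (mod 3)`, and `[2n+1, n-r]_q` matches `[2n+1, n-3j]_q` up to the symmetry `k ↦ 2n+1-k`.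
Gaussian binomials `[N, k]_q` are extended by zero outside `0 ≤ k ≤ N`, so all sums over `j`
are finite.

The sum on the left is `L_{2n+1}(n)`, where
`L_N(t) = ∑_j (q^{3j²-2j} [N, t-3j] - q^{3j²-4j+1} [N, t+1-3j])`. With a companion sum
`M_N(t)`, the two q-Pascal rules give `L_{N+1}(t) = L_N(t) + q^{N+1-t} M_N(t)` and
`M_{N+1}(t) = M_N(t-1) + q^{t-1} L_N(t-1)`, while reindexing `j ↦ -j` gives the reflections
`L_N(t) = -L_N(N+2-t)` and `M_N(t) = -M_N(N+1-t)`. The reflections kill `L_{2n}(n+1)` and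
`M_{2n+1}(n+1)`, so induction on `n` yields `L_{2n}(n) = q^{n²-n}` and `M_{2n}(n+1) = q^{n²}`.
Combining integer powers of `q` needs `q ≠ 0`; at `q = 0` the identity is checked directly.
-/

open Finset Function

lemma sum_range_three_mul {M : Type*} [AddCommMonoid M] (f : ℕ → M) (K : ℕ) :
    ∑ r ∈ range (3 * K), f r =
      ∑ m ∈ range K, (f (3 * m) + f (3 * m + 1) + f (3 * m + 2)) := by
  induction K with
  | zero => simp
  | succ K ih =>
    rw [sum_range_succ _ K, ← ih, show 3 * (K + 1) = 3 * K + 2 + 1 by ring, sum_range_succ,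
      sum_range_succ, sum_range_succ]
    simp only [add_assoc]

lemma finsum_eq_sum_range_add_neg {F : ℤ → ℂ} {K : ℕ}
    (hF : ∀ j : ℤ, j < -(K : ℤ) ∨ (K : ℤ) ≤ j → F j = 0) :
    ∑ᶠ j, F j = ∑ m ∈ range K, (F m + F (-(m + 1))) := by
  have hfin : HasFiniteSupport F := (Set.finite_Ico (-(K : ℤ)) K).subset fun j hj => by
    by_contra h
    exact hj (hF j (by rw [Set.mem_Ico] at h; omega))
  rw [← tsum_eq_finsum (L := .unconditional ℤ) hfin, sum_add_distrib]
  refine (HasSum.of_nat_of_neg_add_one (hasSum_sum_of_ne_finset_zero fun m hm => hF _ ?_)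
    (hasSum_sum_of_ne_finset_zero fun m hm => hF _ ?_)).tsum_eq <;>
  · rw [mem_range] at hm
    omega

section
variable (q : ℂ)

lemma poch_succ (m : ℕ) : poch q q (m + 1) = poch q q m * (1 - q ^ (m + 1)) := by
  rw [poch, prod_range_succ, ← poch, pow_succ']

lemma one_sub_mul_poch_sq (m : ℕ) : (1 - q) * poch (q ^ 2) q m = poch q q (m + 1) := by
  rw [poch, poch, prod_range_succ', pow_zero, mul_one, mul_comm]
  congr 1
  exact prod_congr rfl fun k _ => by ring

lemma one_sub_pow_ne_zero (hq : ‖q‖ < 1) {k : ℕ} (hk : k ≠ 0) : 1 - q ^ k ≠ 0 := by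
  rw [sub_ne_zero, ne_comm]
  intro h
  simpa [← norm_pow, h] using pow_lt_one₀ (norm_nonneg q) hq hk

lemma poch_ne_zero (hq : ‖q‖ < 1) (m : ℕ) : poch q q m ≠ 0 :=
  prod_ne_zero_iff.2 fun k _ => by
    simpa [← pow_succ'] using one_sub_pow_ne_zero q hq k.succ_ne_zero

noncomputable def qBinom (N : ℕ) (k : ℤ) : ℂ :=
  if 0 ≤ k ∧ k ≤ N then poch q q N / (poch q q k.toNat * poch q q (N - k.toNat)) else 0

lemma qBinom_eq_zero {N : ℕ} {k : ℤ} (hk : k < 0 ∨ (N : ℤ) < k) : qBinom q N k = 0 :=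
  if_neg (by omega)

lemma qBinom_add (a b : ℕ) :
    qBinom q (a + b) a = poch q q (a + b) / (poch q q a * poch q q b) := by
  rw [qBinom, if_pos (by omega), Int.toNat_natCast, Nat.add_sub_cancel_left]

lemma qBinom_zero_left (k : ℤ) : qBinom q 0 k = if k = 0 then 1 else 0 := by
  split_ifs with hk
  · simpa [hk, poch] using qBinom_add q 0 0
  · exact qBinom_eq_zero q (by omega)

lemma qBinom_symm (N : ℕ) (k : ℤ) : qBinom q N (N - k) = qBinom q N k := by
  unfold qBinom
  by_cases hk : 0 ≤ k ∧ k ≤ N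
  · rw [if_pos (by omega), if_pos hk, mul_comm, show (N - k : ℤ).toNat = N - k.toNat by omega,
      show N - (N - k.toNat) = k.toNat by omega]
  · rw [if_neg (by omega), if_neg hk]

lemma qBinom_zero_right (hq : ‖q‖ < 1) (N : ℕ) : qBinom q N 0 = 1 := by
  rw [qBinom, if_pos (by omega), Int.toNat_zero, Nat.sub_zero, show poch q q 0 = 1 from
    prod_range_zero _, one_mul, div_self (poch_ne_zero q hq N)]

lemma qBinom_self (hq : ‖q‖ < 1) (N : ℕ) : qBinom q N N = 1 := by
  rw [← qBinom_symm, sub_self, qBinom_zero_right q hq]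

lemma qBinom_succ (hq : ‖q‖ < 1) (N : ℕ) (k : ℤ) :
    qBinom q (N + 1) k = qBinom q N (k - 1) + q ^ k * qBinom q N k := by
  by_cases hout : k < 0 ∨ (N : ℤ) + 1 < k
  · rw [qBinom_eq_zero q (by push_cast; omega), qBinom_eq_zero q (by omega : k - 1 < 0 ∨ _),
      qBinom_eq_zero q (by omega : k < 0 ∨ _), mul_zero, add_zero]
  push Not at hout
  lift k to ℕ using hout.1
  obtain ⟨b, hb⟩ : ∃ b, N + 1 = k + b := ⟨N + 1 - k, by omega⟩
  rcases k with _ | a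
  · rw [Nat.cast_zero, qBinom_zero_right q hq, qBinom_zero_right q hq,
      qBinom_eq_zero q (by omega : (0 : ℤ) - 1 < 0 ∨ _), zpow_zero]
    ring
  rcases b with _ | b
  · obtain rfl : a = N := by omega
    rw [qBinom_eq_zero q (by omega : _ ∨ (a : ℤ) < (a + 1 : ℕ)), Nat.cast_succ,
      add_sub_cancel_right, ← Nat.cast_succ, qBinom_self q hq, qBinom_self q hq]
    ring
  obtain rfl : N = a + 1 + b := by omega
  rw [show a + 1 + b + 1 = (a + 1) + (b + 1) by ring, qBinom_add,
    show ((a + 1 : ℕ) : ℤ) - 1 = a by push_cast; ring, show a + 1 + b = a + (b + 1) by ring,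
    qBinom_add, show a + (b + 1) = (a + 1) + b by ring, qBinom_add, zpow_natCast,
    show a + 1 + (b + 1) = (a + 1 + b) + 1 by ring, poch_succ q (a + 1 + b), poch_succ q a,
    poch_succ q b]
  have := poch_ne_zero q hq
  have := one_sub_pow_ne_zero q hq (Nat.succ_ne_zero a)
  have := one_sub_pow_ne_zero q hq (Nat.succ_ne_zero b)
  field_simp
  ring

lemma qBinom_succ' (hq : ‖q‖ < 1) (N : ℕ) (k : ℤ) :
    qBinom q (N + 1) k = q ^ ((N : ℤ) + 1 - k) * qBinom q N (k - 1) + qBinom q N k := by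
  rw [← qBinom_symm q (N + 1) k, qBinom_succ q hq, ← qBinom_symm q N k,
    ← qBinom_symm q N (k - 1)]
  push_cast
  ring_nf

lemma qBinom_base_zero {N : ℕ} {k : ℤ} (hk : 0 ≤ k ∧ k ≤ N) : qBinom 0 N k = 1 := by
  simp [qBinom, hk, poch]

lemma hasFiniteSupport_mul_qBinom (g : ℤ → ℂ) (N : ℕ) (c : ℤ) :
    HasFiniteSupport fun j => g j * qBinom q N (c - 3 * j) := by
  refine (Set.finite_Icc (-(N : ℤ) - |c|) |c|).subset fun j hj => ?_
  by_contra hj'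
  rw [Set.mem_Icc] at hj'
  have := le_abs_self c
  have := neg_abs_le c
  exact hj (by simp only [qBinom_eq_zero q (by omega : c - 3 * j < 0 ∨ (N : ℤ) < c - 3 * j),
    mul_zero])

lemma zpow_mul_zpow_eq (hq0 : q ≠ 0) {a b c d : ℤ} (h : a + b = c + d) :
    q ^ a * q ^ b = q ^ c * q ^ d := by
  rw [← zpow_add₀ hq0, ← zpow_add₀ hq0, h]

noncomputable def lTerm (N : ℕ) (t j : ℤ) : ℂ :=
  q ^ (3 * j ^ 2 - 2 * j) * qBinom q N (t - 3 * j) -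
    q ^ (3 * j ^ 2 - 4 * j + 1) * qBinom q N (t + 1 - 3 * j)

noncomputable def mTerm (N : ℕ) (t j : ℤ) : ℂ :=
  q ^ (3 * j ^ 2 + j) * qBinom q N (t - 1 - 3 * j) - q ^ (3 * j ^ 2 - j) * qBinom q N (t - 3 * j)

noncomputable def sumL (N : ℕ) (t : ℤ) : ℂ := ∑ᶠ j, lTerm q N t j

noncomputable def sumM (N : ℕ) (t : ℤ) : ℂ := ∑ᶠ j, mTerm q N t j

lemma hasFiniteSupport_lTerm (N : ℕ) (t : ℤ) : HasFiniteSupport (lTerm q N t) :=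
  (hasFiniteSupport_mul_qBinom q _ N t).fun_sub (hasFiniteSupport_mul_qBinom q _ N (t + 1))

lemma hasFiniteSupport_mTerm (N : ℕ) (t : ℤ) : HasFiniteSupport (mTerm q N t) :=
  (hasFiniteSupport_mul_qBinom q _ N (t - 1)).fun_sub (hasFiniteSupport_mul_qBinom q _ N t)

lemma lTerm_succ (hq : ‖q‖ < 1) (hq0 : q ≠ 0) (N : ℕ) (t j : ℤ) :
    lTerm q (N + 1) t j = lTerm q N t j + q ^ ((N : ℤ) + 1 - t) * mTerm q N t j := by
  have h1 := qBinom_succ' q hq N (t - 3 * j)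
  have h2 := qBinom_succ' q hq N (t + 1 - 3 * j)
  rw [show t - 3 * j - 1 = t - 1 - 3 * j by ring] at h1
  rw [show t + 1 - 3 * j - 1 = t - 3 * j by ring] at h2
  simp only [lTerm, mTerm]
  rw [h1, h2]
  linear_combination qBinom q N (t - 1 - 3 * j) * zpow_mul_zpow_eq q hq0
      (a := 3 * j ^ 2 - 2 * j) (b := N + 1 - (t - 3 * j)) (c := N + 1 - t) (d := 3 * j ^ 2 + j)
      (by ring) -
    qBinom q N (t - 3 * j) * zpow_mul_zpow_eq q hq0
      (a := 3 * j ^ 2 - 4 * j + 1) (b := N + 1 - (t + 1 - 3 * j)) (c := N + 1 - t)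
      (d := 3 * j ^ 2 - j) (by ring)

lemma mTerm_succ (hq : ‖q‖ < 1) (hq0 : q ≠ 0) (N : ℕ) (t j : ℤ) :
    mTerm q (N + 1) t j = mTerm q N (t - 1) j + q ^ (t - 1) * lTerm q N (t - 1) j := by
  have h1 := qBinom_succ q hq N (t - 1 - 3 * j)
  have h2 := qBinom_succ q hq N (t - 3 * j)
  rw [show t - 1 - 3 * j - 1 = t - 1 - 1 - 3 * j by ring] at h1
  rw [show t - 3 * j - 1 = t - 1 - 3 * j by ring] at h2
  simp only [lTerm, mTerm]
  rw [h1, h2, show t - 1 + 1 - 3 * j = t - 3 * j by ring]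
  linear_combination qBinom q N (t - 1 - 3 * j) * zpow_mul_zpow_eq q hq0
      (a := 3 * j ^ 2 + j) (b := t - 1 - 3 * j) (c := t - 1) (d := 3 * j ^ 2 - 2 * j) (by ring) -
    qBinom q N (t - 3 * j) * zpow_mul_zpow_eq q hq0
      (a := 3 * j ^ 2 - j) (b := t - 3 * j) (c := t - 1) (d := 3 * j ^ 2 - 4 * j + 1) (by ring)

lemma lTerm_neg (N : ℕ) (t j : ℤ) : lTerm q N t (-j) = -lTerm q N (N + 2 - t) (j + 1) := by
  simp only [lTerm]
  rw [← qBinom_symm q N (N + 2 - t - 3 * (j + 1)),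
    ← qBinom_symm q N (N + 2 - t + 1 - 3 * (j + 1))]
  ring_nf

lemma mTerm_neg (N : ℕ) (t j : ℤ) : mTerm q N t (-j) = -mTerm q N (N + 1 - t) j := by
  simp only [mTerm]
  rw [← qBinom_symm q N (N + 1 - t - 1 - 3 * j), ← qBinom_symm q N (N + 1 - t - 3 * j)]
  ring_nf

lemma sumL_succ (hq : ‖q‖ < 1) (hq0 : q ≠ 0) (N : ℕ) (t : ℤ) :
    sumL q (N + 1) t = sumL q N t + q ^ ((N : ℤ) + 1 - t) * sumM q N t := by
  rw [sumL, sumL, sumM, mul_finsum, ← finsum_add_distrib (hasFiniteSupport_lTerm q N t)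
    ((hasFiniteSupport_mTerm q N t).fun_mul_right _)]
  exact finsum_congr (lTerm_succ q hq hq0 N t)

lemma sumM_succ (hq : ‖q‖ < 1) (hq0 : q ≠ 0) (N : ℕ) (t : ℤ) :
    sumM q (N + 1) t = sumM q N (t - 1) + q ^ (t - 1) * sumL q N (t - 1) := by
  rw [sumL, sumM, sumM, mul_finsum, ← finsum_add_distrib (hasFiniteSupport_mTerm q N (t - 1))
    ((hasFiniteSupport_lTerm q N (t - 1)).fun_mul_right _)]
  exact finsum_congr (mTerm_succ q hq hq0 N t)

lemma sumL_symm (N : ℕ) (t : ℤ) : sumL q N t = -sumL q N (N + 2 - t) := by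
  rw [sumL, sumL, ← finsum_comp_equiv (Equiv.neg ℤ) (f := lTerm q N t),
    ← finsum_comp_equiv (Equiv.addRight 1) (f := lTerm q N (N + 2 - t)), ← finsum_neg_distrib]
  exact finsum_congr fun j => lTerm_neg q N t j

lemma sumM_symm (N : ℕ) (t : ℤ) : sumM q N t = -sumM q N (N + 1 - t) := by
  rw [sumM, sumM, ← finsum_comp_equiv (Equiv.neg ℤ), ← finsum_neg_distrib]
  exact finsum_congr fun j => mTerm_neg q N t j

lemma sumL_zero_zero : sumL q 0 0 = 1 := by
  rw [sumL, finsum_eq_single _ 0 fun j hj => ?_]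
  · simp [lTerm, qBinom_zero_left]
  · simp [lTerm, qBinom_zero_left, hj, show 1 - 3 * j ≠ 0 by omega]

lemma sumM_zero_one : sumM q 0 1 = 1 := by
  rw [sumM, finsum_eq_single _ 0 fun j hj => ?_]
  · simp [mTerm, qBinom_zero_left]
  · simp [mTerm, qBinom_zero_left, hj, show 1 - 3 * j ≠ 0 by omega]

lemma sumL_sumM_diag (hq : ‖q‖ < 1) (hq0 : q ≠ 0) (n : ℕ) :
    sumL q (2 * n) n = q ^ ((n : ℤ) * n - n) ∧
      sumM q (2 * n) (n + 1) = q ^ ((n : ℤ) * n) := by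
  induction n with
  | zero => simpa using ⟨sumL_zero_zero q, sumM_zero_one q⟩
  | succ n ih =>
    obtain ⟨hL, hM⟩ := ih
    have hL' : sumL q (2 * n) (n + 1) = 0 := by
      have h := sumL_symm q (2 * n) (n + 1)
      rwa [show ((2 * n : ℕ) : ℤ) + 2 - (n + 1) = n + 1 by push_cast; ring, self_eq_neg] at h
    have hM' : sumM q (2 * n + 1) (n + 1) = 0 := by
      have h := sumM_symm q (2 * n + 1) (n + 1)
      rwa [show ((2 * n + 1 : ℕ) : ℤ) + 1 - (n + 1) = n + 1 by push_cast; ring,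
        self_eq_neg] at h
    have hL1 : sumL q (2 * n + 1) (n + 1) = q ^ ((n : ℤ) * n + n) := by
      rw [sumL_succ q hq hq0, hL', hM, zero_add, ← zpow_add₀ hq0,
        show ((2 * n : ℕ) : ℤ) + 1 - (n + 1) = n by push_cast; ring]
      ring_nf
    rw [show 2 * (n + 1) = 2 * n + 1 + 1 by ring, Nat.cast_succ]
    constructor
    · rw [sumL_succ q hq hq0, hM', hL1, mul_zero, add_zero]
      ring_nf
    · rw [sumM_succ q hq hq0, add_sub_cancel_right, hM', hL1, zero_add, ← zpow_add₀ hq0]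
      ring_nf

lemma sumL_center (hq : ‖q‖ < 1) (hq0 : q ≠ 0) (n : ℕ) :
    sumL q (2 * n + 1) n = q ^ (n * (n - 1)) * (1 - q ^ (2 * n + 1)) := by
  obtain ⟨hL, hM⟩ := sumL_sumM_diag q hq hq0 n
  have hM0 : sumM q (2 * n) n = -q ^ ((n : ℤ) * n) := by
    rw [sumM_symm, show ((2 * n : ℕ) : ℤ) + 1 - n = n + 1 by push_cast; ring, hM]
  have hexp : ((n * (n - 1) : ℕ) : ℤ) = n * n - n := by
    rcases n with _ | n
    · simp
    · push_cast; ring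
  rw [sumL_succ q hq hq0, hL, hM0, mul_neg, ← sub_eq_add_neg, ← zpow_add₀ hq0, mul_sub,
    mul_one, ← zpow_natCast, ← zpow_natCast q (2 * n + 1), ← zpow_add₀ hq0, hexp]
  push_cast
  ring_nf

noncomputable def quintupleWeight (j : ℤ) : ℂ :=
  q ^ (3 * j ^ 2 - 2 * j) - q ^ (3 * j ^ 2 + 4 * j + 1)

lemma finsum_quintupleWeight_mul_qBinom_eq_sumL (n : ℕ) :
    ∑ᶠ j, quintupleWeight q j * qBinom q (2 * n + 1) (n - 3 * j) = sumL q (2 * n + 1) n := by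
  have hA := hasFiniteSupport_mul_qBinom q (fun j => q ^ (3 * j ^ 2 - 2 * j)) (2 * n + 1) n
  have hB := hasFiniteSupport_mul_qBinom q (fun j => q ^ (3 * j ^ 2 + 4 * j + 1)) (2 * n + 1) n
  have hC := hasFiniteSupport_mul_qBinom q (fun j => q ^ (3 * j ^ 2 - 4 * j + 1))
    (2 * n + 1) (n + 1)
  have hBC : ∑ᶠ j, q ^ (3 * j ^ 2 + 4 * j + 1) * qBinom q (2 * n + 1) (n - 3 * j) =
      ∑ᶠ j, q ^ (3 * j ^ 2 - 4 * j + 1) * qBinom q (2 * n + 1) (n + 1 - 3 * j) := by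
    rw [← finsum_comp_equiv (Equiv.neg ℤ)
      (f := fun j => q ^ (3 * j ^ 2 - 4 * j + 1) * qBinom q (2 * n + 1) (n + 1 - 3 * j))]
    refine finsum_congr fun j => ?_
    rw [Equiv.neg_apply, ← qBinom_symm q _ (n + 1 - 3 * -j)]
    push_cast
    ring_nf
  simp only [quintupleWeight, sub_mul]
  rw [finsum_sub_distrib hA hB, hBC, ← finsum_sub_distrib hA hC]
  rfl

lemma finsum_quintupleWeight_mul_qBinom_base_zero (n : ℕ) :
    ∑ᶠ j, quintupleWeight 0 j * qBinom 0 (2 * n + 1) (n - 3 * j) =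
      0 ^ (n * (n - 1)) * (1 - 0 ^ (2 * n + 1)) := by
  have hw : ∀ j : ℤ, quintupleWeight 0 j = if j = 0 then 1 else if j = -1 then -1 else 0 := by
    intro j
    have h0 : 3 * j ^ 2 - 2 * j = 0 ↔ j = 0 := by
      refine ⟨fun h => ?_, fun h => by simp [h]⟩
      rcases mul_eq_zero.1 (show j * (3 * j - 2) = 0 by linear_combination h) with h | h <;> omega
    have h1 : 3 * j ^ 2 + 4 * j + 1 = 0 ↔ j = -1 := by
      refine ⟨fun h => ?_, fun h => by simp [h]⟩
      rcases mul_eq_zero.1 (show (3 * j + 1) * (j + 1) = 0 by linear_combination h) with h | h <;>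
        omega
    simp only [quintupleWeight, zero_zpow_eq, h0, h1]
    split_ifs <;> simp_all
  rw [finsum_eq_sum_of_support_subset _ (s := {0, -1}) fun j hj => ?_, sum_pair (by norm_num)]
  · simp only [hw, if_pos, if_neg (show (-1 : ℤ) ≠ 0 by norm_num)]
    rw [qBinom_base_zero (by omega)]
    rcases le_or_gt n 1 with hn | hn
    · rw [qBinom_eq_zero 0 (by omega)]
      interval_cases n <;> simp
    · rw [qBinom_base_zero (by omega), zero_pow (Nat.mul_pos (by omega) (by omega)).ne']
      simp
  · simp only [coe_pair, Set.mem_insert_iff, Set.mem_singleton_iff]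
    by_contra! h
    exact hj (by simp [hw, h.1, h.2])

lemma finsum_quintupleWeight_mul_qBinom (hq : ‖q‖ < 1) (n : ℕ) :
    ∑ᶠ j, quintupleWeight q j * qBinom q (2 * n + 1) (n - 3 * j) =
      q ^ (n * (n - 1)) * (1 - q ^ (2 * n + 1)) := by
  rcases eq_or_ne q 0 with rfl | hq0
  · exact finsum_quintupleWeight_mul_qBinom_base_zero n
  · rw [finsum_quintupleWeight_mul_qBinom_eq_sumL, sumL_center q hq hq0]

lemma sum_range_mul_qBinom_eq_finsum (w : ℤ → ℂ) (a : ℕ → ℂ)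
    (h0 : ∀ m : ℕ, a (3 * m) = w m) (h1 : ∀ m : ℕ, a (3 * m + 1) = 0)
    (h2 : ∀ m : ℕ, a (3 * m + 2) = w (-(m + 1))) (n : ℕ) :
    ∑ r ∈ range (n + 1), a r * qBinom q (2 * n + 1) (n - r) =
      ∑ᶠ j, w j * qBinom q (2 * n + 1) (n - 3 * j) := by
  rw [finsum_eq_sum_range_add_neg (K := n + 1) fun j hj => ?_,
    sum_subset (range_subset_range.2 (by omega : n + 1 ≤ 3 * (n + 1))) fun r _ hr => ?_,
    sum_range_three_mul]
  · refine sum_congr rfl fun m _ => ?_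
    rw [h0, h1, h2, zero_mul, add_zero, ← qBinom_symm q _ (n - 3 * -(m + 1 : ℤ))]
    push_cast
    ring_nf
  · rw [mem_range] at hr
    rw [qBinom_eq_zero q (by omega), mul_zero]
  · rw [qBinom_eq_zero q (by push_cast; omega), mul_zero]

lemma zpow_mul_one_sub_pow {a : ℤ} (ha : 0 ≤ a) (b : ℕ) :
    q ^ a * (1 - q ^ b) = q ^ a - q ^ (a + b) := by
  lift a to ℕ using ha
  rw [← Nat.cast_add, zpow_natCast, zpow_natCast, pow_add]
  ring

lemma div_poch_mul_poch_sq (hq : ‖q‖ < 1) {n r : ℕ} (hr : r ≤ n) (x : ℂ) :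
    x / (poch q q (n - r) * poch (q ^ 2) q (n + r)) =
      (1 - q) * x * qBinom q (2 * n + 1) (n - r) / poch q q (2 * n + 1) := by
  rw [← Nat.cast_sub hr, show 2 * n + 1 = (n - r) + (n + r + 1) by omega, qBinom_add,
    show n - r + (n + r + 1) = 2 * n + 1 by omega, ← one_sub_mul_poch_sq q (n + r)]
  have hS : (1 - q) * poch (q ^ 2) q (n + r) ≠ 0 := by
    rw [one_sub_mul_poch_sq]
    exact poch_ne_zero q hq _
  have := left_ne_zero_of_mul hS
  have := right_ne_zero_of_mul hS
  field_simp
  rw [mul_div_mul_right _ _ (poch_ne_zero q hq _)]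

end

/-- A Bailey pair relative to `q` (Warnaar/Slater):
with `α` defined by cases mod 3 and `β_n = q^{n(n-1)}/(q;q)_{2n}`. -/
theorem slater_bailey_pair_mod3 (q : ℂ) (hq : ‖q‖ < 1) (α : ℕ → ℂ)
    (h0 : ∀ m : ℕ, α (3 * m) =
      q ^ ((3 * (m : ℤ) - 2) * (m : ℤ)) * (1 - q ^ (6 * m + 1)) / (1 - q))
    (h1 : ∀ m : ℕ, α (3 * m + 1) = 0)
    (h2 : ∀ m : ℕ, α (3 * m + 2) =
      -(q ^ ((3 * (m : ℤ) + 2) * (m : ℤ)) * (1 - q ^ (6 * m + 5)) / (1 - q)))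
    (n : ℕ) :
    q ^ (n * (n - 1)) / poch q q (2 * n) =
      ∑ r ∈ Finset.range (n + 1), α r / (poch q q (n - r) * poch (q ^ 2) q (n + r)) := by
  have hq1 : (1 : ℂ) - q ≠ 0 := by simpa using one_sub_pow_ne_zero q hq one_ne_zero
  have hα0 (m : ℕ) : (1 - q) * α (3 * m) = quintupleWeight q m := by
    have hm : 0 ≤ (3 * (m : ℤ) - 2) * m := by
      rcases m with _ | m
      · simp
      · push_cast; nlinarith
    rw [h0, mul_div_cancel₀ _ hq1, zpow_mul_one_sub_pow q hm, quintupleWeight]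
    congr 2 <;> push_cast <;> ring
  have hα2 (m : ℕ) : (1 - q) * α (3 * m + 2) = quintupleWeight q (-(m + 1)) := by
    rw [h2, mul_neg, mul_div_cancel₀ _ hq1, zpow_mul_one_sub_pow q (by positivity),
      quintupleWeight, neg_sub]
    congr 2 <;> push_cast <;> ring
  calc q ^ (n * (n - 1)) / poch q q (2 * n)
      = q ^ (n * (n - 1)) * (1 - q ^ (2 * n + 1)) / poch q q (2 * n + 1) := by
        rw [poch_succ, mul_div_mul_right _ _ (one_sub_pow_ne_zero q hq (by omega))]
    _ = (∑ r ∈ range (n + 1), (1 - q) * α r * qBinom q (2 * n + 1) (n - r)) /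
          poch q q (2 * n + 1) := by
        rw [sum_range_mul_qBinom_eq_finsum q _ _ hα0 (fun m => by rw [h1, mul_zero]) hα2,
          finsum_quintupleWeight_mul_qBinom q hq]
    _ = ∑ r ∈ range (n + 1), α r / (poch q q (n - r) * poch (q ^ 2) q (n + r)) := by
        rw [sum_div]
        exact sum_congr rfl fun r hr =>
          (div_poch_mul_poch_sq q hq (Nat.lt_succ_iff.1 (mem_range.1 hr)) _).symm
end

section
/- Σ_{n≥0} Σ_{0≤j<n/3} (-1)^{n+j} z^{n-3j} q^{(n^2-3j^2)/2+(n-j)/2} = Σ_{n≥0} Σ_{n/3<j≤n/2} (-1)^{n+j} z^{-n+3j} q^{(n^2-3j^2)/2+(n-j)/2}, as an identity of formal power series in q with coefficients Laurent polynomials in z (or for |q|<1 and fixed z≠0). -/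
/-!
The substitution `(n, j) ↦ (2n - 3j, n - 2j)` (multiplication by the unit `2 - √3` of `ℤ[√3]`,
followed by `j ↦ -j`) is an involution of `ℤ²` preserving `n² - 3j²` and `n - j`, hence the exponent
of `q` and the parity of `n + j`. It exchanges the wedges `0 ≤ j < n/3` and `n/3 < j ≤ n/2` and
turns `z^(n - 3j)` into `z^(3j - n)`, so both sides are the same sum over `ℕ²`, reindexed. The sums
converge absolutely for `‖q‖ < 1` because the exponent of `q` is at least `n²/3` on the lower wedge.
-/
open Filter

namespace GarvanWedge

theorem summable_pow_mul_pow_mul_self (C : ℝ) {s : ℝ} (hs0 : 0 ≤ s) (hs1 : s < 1) :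
    Summable fun n : ℕ => C ^ n * s ^ (n * n) := by
  have hsmall : ∀ᶠ n : ℕ in atTop, ‖C‖ * s ^ n ≤ 2⁻¹ := by
    have := (tendsto_pow_atTop_nhds_zero_of_lt_one hs0 hs1).const_mul ‖C‖
    rw [mul_zero] at this
    exact this.eventually (ge_mem_nhds (by norm_num))
  refine .of_norm_bounded_eventually_nat
    (summable_geometric_of_lt_one (r := 2⁻¹) (by norm_num) (by norm_num)) ?_
  filter_upwards [hsmall] with n hn
  calc ‖C ^ n * s ^ (n * n)‖ = (‖C‖ * s ^ n) ^ n := by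
        rw [norm_mul, norm_pow, norm_pow, Real.norm_of_nonneg hs0, mul_pow, pow_mul]
    _ ≤ 2⁻¹ ^ n := by gcongr

theorem tsum_subtype_eq_tsum_finset_sum {α β E : Type*} [NormedAddCommGroup E] [CompleteSpace E]
    {s : Set (α × β)} {f : α × β → E} (S : α → Finset β) (hS : ∀ a b, (a, b) ∈ s ↔ b ∈ S a)
    (hf : Summable fun p : s => f p) :
    ∑' p : s, f p = ∑' a, ∑ b ∈ S a, f (a, b) := by
  have hind : Summable (s.indicator f) := summable_subtype_iff_indicator.mp hf
  rw [tsum_subtype, hind.tsum_prod' hind.prod_factor]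
  refine tsum_congr fun a => ?_
  rw [tsum_eq_sum (s := S a) fun b hb => Set.indicator_of_notMem (by rwa [hS]) f]
  exact Finset.sum_congr rfl fun b hb => Set.indicator_of_mem ((hS a b).mpr hb) f

def quadExp (n j : ℤ) : ℤ := (n ^ 2 - 3 * j ^ 2 + n - j) / 2

theorem quadExp_swap (n j : ℤ) : quadExp (2 * n - 3 * j) (n - 2 * j) = quadExp n j := by
  unfold quadExp; congr 1; ring

theorem exists_quadExp_eq_natCast {n j : ℕ} (h : 3 * j < n) :
    ∃ m : ℕ, quadExp n j = m ∧ n * n ≤ 3 * m := by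
  have hpos : 0 ≤ quadExp n j := by unfold quadExp; apply Int.ediv_nonneg _ two_pos.le; nlinarith
  refine ⟨(quadExp n j).toNat, (Int.toNat_of_nonneg hpos).symm, ?_⟩
  have h' : 3 * (j : ℤ) + 1 ≤ n := by exact_mod_cast h
  have hQ : 2 * (n : ℤ) ^ 2 + 3 ≤ 3 * (n ^ 2 - 3 * j ^ 2 + n - j) := by nlinarith
  zify [Int.toNat_of_nonneg hpos]
  unfold quadExp
  rw [← sq]
  omega

def lowerWedge : Set (ℕ × ℕ) := {p | 3 * p.2 < p.1}

def upperWedge : Set (ℕ × ℕ) := {p | 2 * p.2 ≤ p.1 ∧ p.1 < 3 * p.2}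

def wedgeSwap : upperWedge ≃ lowerWedge where
  toFun p := ⟨(2 * p.1.1 - 3 * p.1.2, p.1.1 - 2 * p.1.2), by
    obtain ⟨⟨n, j⟩, h⟩ := p; simp only [upperWedge, lowerWedge, Set.mem_ofPred_eq] at h ⊢; omega⟩
  invFun p := ⟨(2 * p.1.1 - 3 * p.1.2, p.1.1 - 2 * p.1.2), by
    obtain ⟨⟨n, j⟩, h⟩ := p; simp only [upperWedge, lowerWedge, Set.mem_ofPred_eq] at h ⊢; omega⟩
  left_inv := by
    rintro ⟨⟨n, j⟩, h⟩; simp only [upperWedge, Set.mem_ofPred_eq] at h; ext <;> dsimp <;> omega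
  right_inv := by
    rintro ⟨⟨n, j⟩, h⟩; simp only [lowerWedge, Set.mem_ofPred_eq] at h; ext <;> dsimp <;> omega

noncomputable def lowerTerm (q z : ℂ) (p : ℕ × ℕ) : ℂ :=
  (-1) ^ (p.1 + p.2) * z ^ ((p.1 : ℤ) - 3 * p.2) * q ^ quadExp p.1 p.2

noncomputable def upperTerm (q z : ℂ) (p : ℕ × ℕ) : ℂ :=
  (-1) ^ (p.1 + p.2) * z ^ (3 * (p.2 : ℤ) - p.1) * q ^ quadExp p.1 p.2

theorem lowerTerm_wedgeSwap (q z : ℂ) (p : upperWedge) :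
    lowerTerm q z (wedgeSwap p) = upperTerm q z p := by
  obtain ⟨⟨n, j⟩, h⟩ := p
  simp only [upperWedge, Set.mem_ofPred_eq] at h
  have hn : ((2 * n - 3 * j : ℕ) : ℤ) = 2 * n - 3 * j := by omega
  have hj : ((n - 2 * j : ℕ) : ℤ) = n - 2 * j := by omega
  have hsign : (-1 : ℂ) ^ (2 * n - 3 * j + (n - 2 * j)) = (-1) ^ (n + j) := by
    rw [neg_one_pow_eq_pow_mod_two, neg_one_pow_eq_pow_mod_two (n + j)]; congr 1; omega
  simp only [lowerTerm, upperTerm, wedgeSwap, Equiv.coe_fn_mk, hn, hj, quadExp_swap, hsign]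
  congr 3; ring

theorem norm_lowerTerm_le (q z : ℂ) (hq : ‖q‖ ≤ 1) {p : ℕ × ℕ} (hp : p ∈ lowerWedge) :
    ‖lowerTerm q z p‖ ≤ max 1 ‖z‖ ^ p.1 * (‖q‖ ^ (3⁻¹ : ℝ)) ^ (p.1 * p.1) := by
  obtain ⟨n, j⟩ := p
  simp only [lowerWedge, Set.mem_ofPred_eq] at hp
  obtain ⟨m, hm, hnm⟩ := exists_quadExp_eq_natCast hp
  have hz : (n : ℤ) - 3 * j = ((n - 3 * j : ℕ) : ℤ) := by omega
  have hcube : ‖q‖ = (‖q‖ ^ (3⁻¹ : ℝ)) ^ 3 := by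
    exact_mod_cast (Real.rpow_inv_natCast_pow (norm_nonneg q) three_ne_zero).symm
  have hs1 : ‖q‖ ^ (3⁻¹ : ℝ) ≤ 1 := Real.rpow_le_one (norm_nonneg q) hq (by norm_num)
  simp only [lowerTerm, hz, hm, zpow_natCast, norm_mul, norm_pow, norm_neg, norm_one, one_pow,
    one_mul]
  gcongr
  · calc ‖z‖ ^ (n - 3 * j) ≤ max 1 ‖z‖ ^ (n - 3 * j) := by gcongr; exact le_max_right _ _
      _ ≤ max 1 ‖z‖ ^ n := pow_le_pow_right₀ (le_max_left _ _) (by omega)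
  · nth_rewrite 1 [hcube]
    rw [← pow_mul]
    exact pow_le_pow_of_le_one (by positivity) hs1 hnm

theorem summable_lowerTerm (q z : ℂ) (hq : ‖q‖ < 1) :
    Summable fun p : lowerWedge => lowerTerm q z p := by
  set M := max 1 ‖z‖
  set s := ‖q‖ ^ (3⁻¹ : ℝ)
  have hs0 : 0 ≤ s := by positivity
  have hg : Summable fun p : ℕ × ℕ => (2 * M) ^ p.1 * s ^ (p.1 * p.1) * 2⁻¹ ^ p.2 :=
    (summable_pow_mul_pow_mul_self (2 * M) hs0
        (Real.rpow_lt_one (norm_nonneg q) hq (by norm_num))).mul_of_nonneg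
      (summable_geometric_of_lt_one (by norm_num) (by norm_num))
      (fun n => by positivity) (fun j => by positivity)
  refine .of_norm_bounded (hg.subtype lowerWedge) fun ⟨⟨n, j⟩, hp⟩ => ?_
  have hjn : j ≤ n := by simp only [lowerWedge, Set.mem_ofPred_eq] at hp; omega
  calc ‖lowerTerm q z (n, j)‖ ≤ M ^ n * s ^ (n * n) := norm_lowerTerm_le q z hq.le hp
    _ ≤ M ^ n * s ^ (n * n) * (2 ^ n * 2⁻¹ ^ j) := by
        refine le_mul_of_one_le_right (by positivity) ?_
        rw [inv_pow, ← div_eq_mul_inv, one_le_div₀ (by positivity)]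
        exact pow_le_pow_right₀ one_le_two hjn
    _ = (2 * M) ^ n * s ^ (n * n) * 2⁻¹ ^ j := by ring

end GarvanWedge

open GarvanWedge in
theorem garvan_wedge_symmetry_general (q z : ℂ) (hq : ‖q‖ < 1) :
    (∑' n : ℕ, ∑ j ∈ (Finset.range n).filter (fun j => 3 * j < n),
        (-1 : ℂ) ^ (n + j) * z ^ ((n : ℤ) - 3 * (j : ℤ)) *
          q ^ (((n : ℤ) ^ 2 - 3 * (j : ℤ) ^ 2 + (n : ℤ) - (j : ℤ)) / 2)) =
      ∑' n : ℕ, ∑ j ∈ (Finset.range (n / 2 + 1)).filter (fun j => n < 3 * j),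
        (-1 : ℂ) ^ (n + j) * z ^ (3 * (j : ℤ) - (n : ℤ)) *
          q ^ (((n : ℤ) ^ 2 - 3 * (j : ℤ) ^ 2 + (n : ℤ) - (j : ℤ)) / 2) := by
  have hlower := summable_lowerTerm q z hq
  have hupper : Summable fun p : upperWedge => upperTerm q z p := by
    simpa only [Function.comp_def, lowerTerm_wedgeSwap] using wedgeSwap.summable_iff.mpr hlower
  calc _ = ∑' p : lowerWedge, lowerTerm q z p := by
        refine (tsum_subtype_eq_tsum_finset_sum _ (fun n j => ?_) hlower).symm
        simp only [lowerWedge, Set.mem_ofPred_eq, Finset.mem_filter, Finset.mem_range]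
        omega
    _ = ∑' p : upperWedge, upperTerm q z p := by
        simp only [← lowerTerm_wedgeSwap, wedgeSwap.tsum_eq fun p => lowerTerm q z p]
    _ = _ := by
        refine tsum_subtype_eq_tsum_finset_sum _ (fun n j => ?_) hupper
        simp only [upperWedge, Set.mem_ofPred_eq, Finset.mem_filter, Finset.mem_range]
        omega

/-- Garvan's symmetry identity (Eq. (2.14) of Garvan 2014) relating
the two wedges of the indefinite quadratic form `n² - 3j²`. -/
theorem garvan_wedge_symmetry (q z : ℂ) (hq : ‖q‖ < 1) (hz : z ≠ 0) :
    (∑' n : ℕ, ∑ j ∈ (Finset.range n).filter (fun j => 3 * j < n),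
        (-1 : ℂ) ^ (n + j) * z ^ ((n : ℤ) - 3 * (j : ℤ)) *
          q ^ (((n : ℤ) ^ 2 - 3 * (j : ℤ) ^ 2 + (n : ℤ) - (j : ℤ)) / 2)) =
      ∑' n : ℕ, ∑ j ∈ (Finset.range (n / 2 + 1)).filter (fun j => n < 3 * j),
        (-1 : ℂ) ^ (n + j) * z ^ (3 * (j : ℤ) - (n : ℤ)) *
          q ^ (((n : ℤ) ^ 2 - 3 * (j : ℤ) ^ 2 + (n : ℤ) - (j : ℤ)) / 2) :=
  garvan_wedge_symmetry_general q z hq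
end
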